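/- arXiv:1511.09437 — 5 statements merged into one kernel-verified Lean document; each statement's English description precedes it below -/
import Mathlib

section
/- (Scarf-type single-period bound) Let b > 0, U > 0, x ∈ [0,U], μ ∈ [0,U], and let C(x,d) = b*max(d-x,0) + max(x-d,0). Then for every random variable D supported on [0,U] with E[D] = μ, one has E[C(x,D)] ≤ (1 - (b+1)μ/U)*x + b*μ, and equality is attained by the two-point distribution with P(D=0) = 1 - μ/U and P(D=U) = μ/U. -/
open MeasureTheory

/-- Single-period newsvendor cost. -/
noncomputable def C (b x d : ℝ) : ℝ := b * max (d - x) 0 + max (x - d) 0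

lemma C_cont (b x : ℝ) : Continuous (fun d => C b x d) := by
  unfold C; fun_prop

lemma C_line (b U x : ℝ) (hb : 0 < b) (hU : 0 < U)
    (hx : x ∈ Set.Icc (0 : ℝ) U) {d : ℝ} (hd : d ∈ Set.Icc (0 : ℝ) U) :
    C b x d ≤ x + (b * U - (b + 1) * x) / U * d := by
  obtain ⟨hx0, hxU⟩ := hx
  obtain ⟨hd0, hdU⟩ := hd
  unfold C
  rcases le_total d x with h | h
  · rw [max_eq_right (by linarith), max_eq_left (by linarith)]
    have key : x + (b * U - (b + 1) * x) / U * d - (b * 0 + (x - d))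
        = ((b + 1) * (U - x) * d) / U := by field_simp; ring
    have hnn : 0 ≤ ((b + 1) * (U - x) * d) / U :=
      div_nonneg (mul_nonneg (mul_nonneg (by linarith) (by linarith)) hd0) hU.le
    linarith
  · rw [max_eq_left (by linarith), max_eq_right (by linarith)]
    have key : x + (b * U - (b + 1) * x) / U * d - (b * (d - x) + 0)
        = ((b + 1) * x * (U - d)) / U := by field_simp; ring
    have hnn : 0 ≤ ((b + 1) * x * (U - d)) / U :=
      div_nonneg (mul_nonneg (mul_nonneg (by linarith) hx0) (by linarith)) hU.le
    linarith

theorem stmt6 (b U x μ : ℝ) (hb : 0 < b) (hU : 0 < U)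
    (hx : x ∈ Set.Icc (0 : ℝ) U) (hμ : μ ∈ Set.Icc (0 : ℝ) U) :
    (∀ (Ω : Type) (_ : MeasurableSpace Ω) (P : Measure Ω), IsProbabilityMeasure P →
      ∀ D : Ω → ℝ, Measurable D → (∀ᵐ ω ∂P, D ω ∈ Set.Icc (0 : ℝ) U) →
        (∫ ω, D ω ∂P) = μ →
        (∫ ω, C b x (D ω) ∂P) ≤ (1 - (b + 1) * μ / U) * x + b * μ) ∧
    (∫ d, C b x d
        ∂(ENNReal.ofReal (1 - μ / U) • Measure.dirac (0 : ℝ) +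
          ENNReal.ofReal (μ / U) • Measure.dirac U))
      = (1 - (b + 1) * μ / U) * x + b * μ := by
  obtain ⟨hx0, hxU⟩ := hx
  obtain ⟨hμ0, hμU⟩ := hμ
  constructor
  · intro Ω _ P hP D hD hDs hDm
    have hDint : Integrable D P := by
      apply Integrable.mono' (integrable_const U) hD.aestronglyMeasurable
      filter_upwards [hDs] with ω ⟨h1, h2⟩
      rw [Real.norm_eq_abs, abs_of_nonneg h1]; exact h2
    have hCint : Integrable (fun ω => C b x (D ω)) P := by
      apply Integrable.mono' (integrable_const ((b + 1) * U))
        ((C_cont b x).measurable.comp hD).aestronglyMeasurable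
      filter_upwards [hDs] with ω ⟨h1, h2⟩
      show ‖C b x (D ω)‖ ≤ (b + 1) * U
      unfold C
      rw [Real.norm_eq_abs, abs_of_nonneg (by positivity)]
      have : max (D ω - x) 0 ≤ U := by
        apply max_le (by linarith) hU.le
      have : max (x - D ω) 0 ≤ U := by
        apply max_le (by linarith) hU.le
      nlinarith [le_max_right (D ω - x) 0, le_max_right (x - D ω) 0]
    have hle : (∫ ω, C b x (D ω) ∂P) ≤ ∫ ω, x + (b * U - (b + 1) * x) / U * D ω ∂P := by
      apply integral_mono_ae hCint ((integrable_const x).add (hDint.const_mul _))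
      filter_upwards [hDs] with ω hω
      exact C_line b U x hb hU ⟨hx0, hxU⟩ hω
    rw [integral_add (integrable_const x) (hDint.const_mul _), integral_const,
      integral_const_mul, hDm, probReal_univ, smul_eq_mul, one_mul] at hle
    calc (∫ ω, C b x (D ω) ∂P) ≤ x + (b * U - (b + 1) * x) / U * μ := hle
      _ = (1 - (b + 1) * μ / U) * x + b * μ := by field_simp; ring
  · have hid : ∀ a : ℝ, Integrable (fun d => C b x d) (Measure.dirac a) := by
      intro a
      refine ⟨(C_cont b x).measurable.aestronglyMeasurable, ?_⟩
      rw [HasFiniteIntegral, lintegral_dirac a]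
      exact ENNReal.coe_lt_top
    have h1 : Integrable (fun d => C b x d)
        (ENNReal.ofReal (1 - μ / U) • Measure.dirac (0 : ℝ)) :=
      (hid 0).smul_measure ENNReal.ofReal_ne_top
    have h2 : Integrable (fun d => C b x d)
        (ENNReal.ofReal (μ / U) • Measure.dirac U) :=
      (hid U).smul_measure ENNReal.ofReal_ne_top
    rw [integral_add_measure h1 h2, integral_smul_measure, integral_smul_measure,
      integral_dirac, integral_dirac,
      ENNReal.toReal_ofReal (by
        have : μ / U ≤ 1 := (div_le_one hU).mpr hμU
        linarith),
      ENNReal.toReal_ofReal (div_nonneg hμ0 hU.le)]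
    unfold C
    rw [max_eq_right (by linarith), max_eq_left (by linarith),
      max_eq_left (by linarith), max_eq_right (by linarith)]
    simp only [smul_eq_mul]
    field_simp
    ring
end

section
/- (Breakpoint continuity identities) Fix b > 0, U > 0, integer T ≥ 1, and define A(T,j), B(T,j) as usual, F(T,j)(x,μ) = -b*x + (b+T)*B(T,j+1) + (T*b - (b+1)*(j+1))*μ and G(T,j)(x,μ) = (T - (b+T)*μ/A(T,j))*x + (T-j)*b*μ. Then for every 1 ≤ j ≤ T-1 and every d ∈ [0,U]: F(T,j-1)(B(T,j), d) = G(T,j)(B(T,j), d) = G(T,j-1)(B(T,j), d) = T*B(T,j) + (T*b - (b+1)*j)*d. -/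
/-- `A b U T j = U * ∏_{k=j+1}^{T-1} k/(b+k)` (empty product = 1). -/
noncomputable def A (b U : ℝ) (T j : ℤ) : ℝ :=
  U * ∏ k ∈ Finset.Icc (j + 1) (T - 1), ((k : ℝ) / (b + (k : ℝ)))

/-- `B(T,j) = (j/(b+T)) A(T,j)`. -/
noncomputable def B (b U : ℝ) (T j : ℤ) : ℝ :=
  (j : ℝ) * A b U T j / (b + (T : ℝ))

/-- `F(T,j)(x,μ) = -b x + (b+T) B(T,j+1) + (Tb - (b+1)(j+1)) μ`. -/
noncomputable def F (b U : ℝ) (T j : ℤ) (x μ : ℝ) : ℝ :=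
  -b * x + (b + (T : ℝ)) * B b U T (j + 1) + ((T : ℝ) * b - (b + 1) * ((j : ℝ) + 1)) * μ

/-- `G(T,j)(x,μ) = (T - (b+T) μ / A(T,j)) x + (T-j) b μ`. -/
noncomputable def G (b U : ℝ) (T j : ℤ) (x μ : ℝ) : ℝ :=
  ((T : ℝ) - (b + (T : ℝ)) * μ / A b U T j) * x + ((T : ℝ) - (j : ℝ)) * b * μ

lemma A_pos (b U : ℝ) (hb : 0 < b) (hU : 0 < U) (T j : ℤ) (hj : 0 ≤ j) :
    0 < A b U T j := by
  unfold A
  apply mul_pos hU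
  apply Finset.prod_pos
  intro k hk
  rw [Finset.mem_Icc] at hk
  have hk1 : (1 : ℤ) ≤ k := by omega
  have : (1 : ℝ) ≤ (k : ℝ) := by exact_mod_cast hk1
  have hk0 : (0 : ℝ) < (k : ℝ) := by linarith
  exact div_pos hk0 (by linarith)

lemma A_rec (b U : ℝ) (hb : 0 < b) (T j : ℤ) (hj : 1 ≤ j) (hjT : j ≤ T - 1) :
    A b U T (j - 1) = ((j : ℝ) / (b + (j : ℝ))) * A b U T j := by
  unfold A
  have h : Finset.Icc (j - 1 + 1) (T - 1) = insert j (Finset.Icc (j + 1) (T - 1)) := by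
    ext k
    simp only [Finset.mem_Icc, Finset.mem_insert]
    omega
  rw [h, Finset.prod_insert (by simp [Finset.mem_Icc])]
  ring

theorem stmt9 (b U : ℝ) (hb : 0 < b) (hU : 0 < U) (T : ℤ) (hT : 1 ≤ T) :
    ∀ j : ℤ, 1 ≤ j → j ≤ T - 1 → ∀ d ∈ Set.Icc (0 : ℝ) U,
      F b U T (j - 1) (B b U T j) d = (T : ℝ) * B b U T j + ((T : ℝ) * b - (b + 1) * (j : ℝ)) * d ∧
      G b U T j (B b U T j) d = (T : ℝ) * B b U T j + ((T : ℝ) * b - (b + 1) * (j : ℝ)) * d ∧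
      G b U T (j - 1) (B b U T j) d = (T : ℝ) * B b U T j + ((T : ℝ) * b - (b + 1) * (j : ℝ)) * d := by
  intro j hj hjT d _
  have hAj : 0 < A b U T j := A_pos b U hb hU T j (by omega)
  have hAj1 : 0 < A b U T (j - 1) := A_pos b U hb hU T (j - 1) (by omega)
  have hjR : (1 : ℝ) ≤ (j : ℝ) := by exact_mod_cast hj
  have hbj : b + (j : ℝ) ≠ 0 := by linarith
  have hbT : b + (T : ℝ) ≠ 0 := by
    have : (1 : ℝ) ≤ (T : ℝ) := by exact_mod_cast hT
    linarith
  have hrec := A_rec b U hb T j hj hjT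
  refine ⟨?_, ?_, ?_⟩
  · unfold F
    rw [show j - 1 + 1 = j by ring]
    unfold B
    push_cast
    field_simp
    ring
  · unfold G B
    field_simp
    ring
  · unfold G B
    rw [hrec]
    have hjne : (j : ℝ) ≠ 0 := by linarith
    push_cast
    field_simp
    ring
end

section
/- Fix b > 0, U > 0, μ ∈ (0,U], and for each integer T ≥ 1 define Γ(T,μ) = 0 if μ = 0 and otherwise the unique j+1 with j ∈ [-1,T-1] such that μ ∈ (A(T+1,j), A(T+1,j+1)], where A(T,j) = U * ∏_{k=j+1}^{T-1} k/(b+k) and A(T,T) = (b+T)U/T. Then lim_{T→∞} Γ(T,μ)/T = (μ/U)^{1/b} and lim_{T→∞} A(T+1, Γ(T,μ)) = μ. -/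
open Filter

private lemma prod_Icc_top {a c : ℤ} (h : a ≤ c + 1) (f : ℤ → ℝ) :
    ∏ k ∈ Finset.Icc a (c + 1), f k = (∏ k ∈ Finset.Icc a c, f k) * f (c + 1) := by
  have he : Finset.Icc a (c + 1) = insert (c + 1) (Finset.Icc a c) := by
    ext x; simp only [Finset.mem_Icc, Finset.mem_insert]; omega
  rw [he, Finset.prod_insert (by simp only [Finset.mem_Icc]; omega), mul_comm]

private lemma prod_Icc_bot {a c : ℤ} (h : a ≤ c) (f : ℤ → ℝ) :
    ∏ k ∈ Finset.Icc a c, f k = f a * ∏ k ∈ Finset.Icc (a + 1) c, f k := by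
  have he : Finset.Icc a c = insert a (Finset.Icc (a + 1) c) := by
    ext x; simp only [Finset.mem_Icc, Finset.mem_insert]; omega
  rw [he, Finset.prod_insert (by simp only [Finset.mem_Icc]; omega)]

private lemma ineq_a {b x : ℝ} (hb : 0 < b) (hx : 0 < x) :
    1 + b / (x + 1) ≤ ((x + 1) / x) ^ b := by
  have hx1 : (0:ℝ) < x + 1 := by linarith
  have hlog : 1 / (x + 1) ≤ Real.log ((x + 1) / x) := by
    have h := Real.log_le_sub_one_of_pos (show (0:ℝ) < x / (x + 1) by positivity)
    have hrw : Real.log (x / (x + 1)) = - Real.log ((x + 1) / x) := by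
      rw [Real.log_div (by positivity) (by positivity),
        Real.log_div (by positivity) (by positivity)]; ring
    rw [hrw] at h
    have : x / (x + 1) - 1 = - (1 / (x + 1)) := by field_simp; ring
    linarith [this ▸ h]
  have hpow : ((x + 1) / x) ^ b = Real.exp (b * Real.log ((x + 1) / x)) := by
    rw [Real.rpow_def_of_pos (by positivity), mul_comm]
  have h1 : b * Real.log ((x + 1) / x) + 1 ≤ Real.exp (b * Real.log ((x + 1) / x)) :=
    Real.add_one_le_exp _
  have h2 : b * (1 / (x + 1)) ≤ b * Real.log ((x + 1) / x) :=
    mul_le_mul_of_nonneg_left hlog hb.le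
  rw [hpow]
  have : b / (x + 1) = b * (1 / (x + 1)) := by ring
  linarith [this ▸ le_refl (b / (x+1))]

private lemma ineq_b {b y : ℝ} (hb : 0 < b) (hy : 0 < y) :
    (y - b) / y ≤ (y / (y + 1)) ^ b := by
  have hy1 : (0:ℝ) < y + 1 := by linarith
  have hlog : Real.log ((y + 1) / y) ≤ 1 / y := by
    have h := Real.log_le_sub_one_of_pos (show (0:ℝ) < (y + 1) / y by positivity)
    have : (y + 1) / y - 1 = 1 / y := by field_simp; ring
    linarith [this ▸ h]
  have hpow : (y / (y + 1)) ^ b = Real.exp (b * Real.log (y / (y + 1))) := by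
    rw [Real.rpow_def_of_pos (by positivity), mul_comm]
  have hrw : Real.log (y / (y + 1)) = - Real.log ((y + 1) / y) := by
    rw [Real.log_div (by positivity) (by positivity),
      Real.log_div (by positivity) (by positivity)]; ring
  have h1 : 1 + (- (b / y)) ≤ Real.exp (- (b / y)) := by
    have := Real.add_one_le_exp (-(b / y)); linarith
  have h2 : Real.exp (- (b / y)) ≤ Real.exp (b * Real.log (y / (y + 1))) := by
    apply Real.exp_le_exp.mpr
    rw [hrw]
    have : b * Real.log ((y+1)/y) ≤ b * (1 / y) := mul_le_mul_of_nonneg_left hlog hb.le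
    have hbd : b * (1 / y) = b / y := by ring
    nlinarith
  have h3 : (y - b) / y = 1 - b / y := by field_simp
  rw [hpow, h3]
  have := h1.trans h2
  linarith

private lemma P_pos {b : ℝ} (hb : 0 < b) {j T : ℤ} (hj : 0 ≤ j) :
    0 < ∏ k ∈ Finset.Icc (j + 1) T, ((k : ℝ) / (b + (k : ℝ))) := by
  apply Finset.prod_pos
  intro k hk
  have hk1 : j + 1 ≤ k := (Finset.mem_Icc.mp hk).1
  have hk0 : (0:ℝ) < (k:ℝ) := by exact_mod_cast (by omega : (0:ℤ) < k)
  exact div_pos hk0 (by linarith)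

private lemma P_lower {b : ℝ} (hb : 0 < b) {j T : ℤ} (hj : 1 ≤ j) (hT : j ≤ T) :
    ((j : ℝ) / (T : ℝ)) ^ b ≤ ∏ k ∈ Finset.Icc (j + 1) T, ((k : ℝ) / (b + (k : ℝ))) := by
  refine Int.le_induction
    (motive := fun T _ => ((j : ℝ) / (T : ℝ)) ^ b ≤ ∏ k ∈ Finset.Icc (j + 1) T, ((k : ℝ) / (b + (k : ℝ))))
    ?_ ?_ T hT
  · show ((j:ℝ) / (j:ℝ)) ^ b ≤ ∏ k ∈ Finset.Icc (j + 1) j, ((k : ℝ) / (b + (k : ℝ)))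
    rw [Finset.Icc_eq_empty (by omega), Finset.prod_empty,
      div_self (by exact_mod_cast (by omega : j ≠ 0)), Real.one_rpow]
  · intro T hT ih
    have hjR : (0:ℝ) < (j:ℝ) := by exact_mod_cast (by omega : (0:ℤ) < j)
    have hTR : (0:ℝ) < (T:ℝ) := by exact_mod_cast (by omega : (0:ℤ) < T)
    have hT1 : (0:ℝ) < (T:ℝ) + 1 := by linarith
    rw [prod_Icc_top (by omega)]
    push_cast
    have hsplit : ((j:ℝ) / ((T:ℝ) + 1)) ^ b = ((j:ℝ) / (T:ℝ)) ^ b * ((T:ℝ) / ((T:ℝ)+1)) ^ b := by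
      rw [← Real.mul_rpow (by positivity) (by positivity)]
      congr 1
      field_simp
    rw [hsplit]
    have key : ((T:ℝ) / ((T:ℝ)+1)) ^ b ≤ ((T:ℝ)+1) / (b + ((T:ℝ)+1)) := by
      have ha := ineq_a hb hTR
      have hA1 : (0:ℝ) < (((T:ℝ)+1)/(T:ℝ)) ^ b := Real.rpow_pos_of_pos (by positivity) b
      have hmul : ((T:ℝ) / ((T:ℝ)+1)) ^ b * ((((T:ℝ)+1)/(T:ℝ)) ^ b) = 1 := by
        rw [← Real.mul_rpow (by positivity) (by positivity)]
        rw [show (T:ℝ) / ((T:ℝ)+1) * (((T:ℝ)+1)/(T:ℝ)) = 1 by field_simp]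
        exact Real.one_rpow b
      have hq : (0:ℝ) < (b + ((T:ℝ)+1)) / ((T:ℝ)+1) := by positivity
      have hle : (b + ((T:ℝ)+1)) / ((T:ℝ)+1) ≤ (((T:ℝ)+1)/(T:ℝ)) ^ b := by
        have : (b + ((T:ℝ)+1)) / ((T:ℝ)+1) = 1 + b / ((T:ℝ)+1) := by field_simp; ring
        rw [this]; exact ha
      have h2 : ((T:ℝ) / ((T:ℝ)+1)) ^ b = ((((T:ℝ)+1)/(T:ℝ)) ^ b)⁻¹ := by
        field_simp [eq_div_iff hA1.ne'] at hmul ⊢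
        linarith [hmul]
      rw [h2]
      rw [inv_le_comm₀ hA1 (by positivity)]
      rw [show (((T:ℝ)+1) / (b + ((T:ℝ)+1)))⁻¹ = (b + ((T:ℝ)+1)) / ((T:ℝ)+1) by
        rw [inv_div]]
      exact hle
    calc ((j:ℝ)/(T:ℝ)) ^ b * ((T:ℝ)/((T:ℝ)+1)) ^ b
        ≤ ((j:ℝ)/(T:ℝ)) ^ b * (((T:ℝ)+1) / (b + ((T:ℝ)+1))) :=
          mul_le_mul_of_nonneg_left key (by positivity)
      _ ≤ (∏ k ∈ Finset.Icc (j + 1) T, ((k : ℝ) / (b + (k : ℝ)))) *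
            (((T:ℝ)+1) / (b + ((T:ℝ)+1))) :=
          mul_le_mul_of_nonneg_right ih (by positivity)

private lemma P_upper {b : ℝ} (hb : 0 < b) {j T : ℤ} (hj : 0 ≤ j) (hT : j ≤ T) :
    ∏ k ∈ Finset.Icc (j + 1) T, ((k : ℝ) / (b + (k : ℝ)))
      ≤ (((j : ℝ) + 1 + b) / ((T : ℝ) + 1 + b)) ^ b := by
  refine Int.le_induction
    (motive := fun T _ => ∏ k ∈ Finset.Icc (j + 1) T, ((k : ℝ) / (b + (k : ℝ)))
      ≤ (((j : ℝ) + 1 + b) / ((T : ℝ) + 1 + b)) ^ b)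
    ?_ ?_ T hT
  · show ∏ k ∈ Finset.Icc (j + 1) j, ((k : ℝ) / (b + (k : ℝ)))
        ≤ (((j:ℝ) + 1 + b) / ((j:ℝ) + 1 + b)) ^ b
    rw [Finset.Icc_eq_empty (by omega), Finset.prod_empty,
      div_self (by positivity : ((j:ℝ) + 1 + b) ≠ 0), Real.one_rpow]
  · intro T hT ih
    have hjR : (0:ℝ) ≤ (j:ℝ) := by exact_mod_cast hj
    have hTR : (0:ℝ) ≤ (T:ℝ) := by exact_mod_cast (by omega : (0:ℤ) ≤ T)
    rw [prod_Icc_top (by omega)]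
    push_cast
    have key : ((T:ℝ)+1) / (b + ((T:ℝ)+1)) ≤ ((((T:ℝ)+1+b)) / ((T:ℝ)+2+b)) ^ b := by
      have := ineq_b hb (show (0:ℝ) < (T:ℝ)+1+b by linarith)
      have h1 : ((T:ℝ)+1+b - b) / ((T:ℝ)+1+b) = ((T:ℝ)+1) / (b + ((T:ℝ)+1)) := by
        rw [show (T:ℝ)+1+b-b = (T:ℝ)+1 by ring, show b + ((T:ℝ)+1) = (T:ℝ)+1+b by ring]
      have h2 : ((T:ℝ)+1+b) / (((T:ℝ)+1+b) + 1) = ((T:ℝ)+1+b) / ((T:ℝ)+2+b) := by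
        rw [show ((T:ℝ)+1+b)+1 = (T:ℝ)+2+b by ring]
      rw [h1, h2] at this
      exact this
    have hsplit : (((j:ℝ)+1+b) / ((T:ℝ)+1+1+b)) ^ b
        = (((j:ℝ)+1+b) / ((T:ℝ)+1+b)) ^ b * ((((T:ℝ)+1+b)) / ((T:ℝ)+2+b)) ^ b := by
      rw [← Real.mul_rpow (by positivity) (by positivity)]
      congr 1
      rw [div_mul_div_comm, div_eq_div_iff (by positivity) (by positivity)]
      ring
    rw [hsplit]
    calc (∏ k ∈ Finset.Icc (j + 1) T, ((k : ℝ) / (b + (k : ℝ)))) * (((T:ℝ)+1) / (b + ((T:ℝ)+1)))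
        ≤ (((j:ℝ)+1+b) / ((T:ℝ)+1+b)) ^ b * (((T:ℝ)+1) / (b + ((T:ℝ)+1))) :=
          mul_le_mul_of_nonneg_right ih (by positivity)
      _ ≤ (((j:ℝ)+1+b) / ((T:ℝ)+1+b)) ^ b * ((((T:ℝ)+1+b)) / ((T:ℝ)+2+b)) ^ b :=
          mul_le_mul_of_nonneg_left key (by positivity)

theorem stmt11 (b U μ : ℝ) (hb : 0 < b) (hU : 0 < U) (hμ : μ ∈ Set.Ioc (0 : ℝ) U)
    (Γ : ℤ → ℤ)
    (hΓ : ∀ T : ℤ, 1 ≤ T → 0 ≤ Γ T ∧ Γ T ≤ T ∧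
      A b U (T + 1) (Γ T - 1) < μ ∧ μ ≤ A b U (T + 1) (Γ T)) :
    Tendsto (fun T : ℕ => (Γ (T : ℤ) : ℝ) / (T : ℝ)) atTop (nhds ((μ / U) ^ (1 / b))) ∧
    Tendsto (fun T : ℕ => A b U ((T : ℤ) + 1) (Γ (T : ℤ))) atTop (nhds μ) := by
  obtain ⟨hμ0, hμU⟩ := hμ
  set t : ℝ := (μ / U) ^ (1 / b) with ht
  have hγ0 : 0 < μ / U := by positivity
  have hγ1 : μ / U ≤ 1 := by rw [div_le_one hU]; exact hμU
  have ht0 : 0 < t := Real.rpow_pos_of_pos hγ0 _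
  have ht1 : t ≤ 1 := Real.rpow_le_one hγ0.le hγ1 (by positivity)
  -- key bounds for each T ≥ 1
  have key : ∀ T : ℤ, 1 ≤ T →
      t * (T:ℝ) - (1 + b) ≤ (Γ T : ℝ) ∧ (Γ T : ℝ) ≤ t * (T:ℝ) + 1 := by
    intro T hT
    obtain ⟨h0, h1, h2, h3⟩ := hΓ T hT
    have hTR : (0:ℝ) < (T:ℝ) := by exact_mod_cast (by omega : (0:ℤ) < T)
    constructor
    · -- lower bound from μ ≤ A(T+1, Γ T) ≤ U * ((Γ+1+b)/(T+1+b))^b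
      have hup := P_upper hb h0 h1 (b := b) (j := Γ T) (T := T)
      have hA : A b U (T + 1) (Γ T) = U * ∏ k ∈ Finset.Icc (Γ T + 1) T, ((k : ℝ) / (b + (k : ℝ))) := by
        unfold A; norm_num
      have h4 : μ ≤ U * (((Γ T : ℝ) + 1 + b) / ((T : ℝ) + 1 + b)) ^ b := by
        refine h3.trans ?_
        rw [hA]
        exact mul_le_mul_of_nonneg_left hup hU.le
      have h5 : μ / U ≤ (((Γ T : ℝ) + 1 + b) / ((T : ℝ) + 1 + b)) ^ b :=
        (div_le_iff₀ hU).mpr (by linarith [h4])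
      have hΓR0 : (0:ℝ) ≤ (Γ T : ℝ) := by exact_mod_cast h0
      have h6 : t ≤ ((Γ T : ℝ) + 1 + b) / ((T : ℝ) + 1 + b) := by
        rw [ht, one_div]
        rw [Real.rpow_inv_le_iff_of_pos hγ0.le (by positivity) hb]
        exact h5
      have h7 : t * ((T:ℝ) + 1 + b) ≤ (Γ T : ℝ) + 1 + b :=
        (le_div_iff₀ (by positivity)).mp h6
      nlinarith [mul_le_mul_of_nonneg_left (show (0:ℝ) ≤ 1 + b by linarith) ht0.le]
    · -- upper bound from A(T+1, Γ T - 1) < μ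
      rcases le_or_gt (Γ T) 1 with hle | hgt
      · have : (Γ T : ℝ) ≤ 1 := by exact_mod_cast hle
        nlinarith [mul_pos ht0 hTR]
      · -- Γ T ≥ 2
        have hj1 : (1:ℤ) ≤ Γ T - 1 := by omega
        have hjT : Γ T - 1 ≤ T := by omega
        have hlow := P_lower hb hj1 hjT (b := b)
        have hA : A b U (T + 1) (Γ T - 1)
            = U * ∏ k ∈ Finset.Icc (Γ T - 1 + 1) T, ((k : ℝ) / (b + (k : ℝ))) := by
          unfold A; norm_num
        have h4 : U * (((Γ T : ℝ) - 1) / (T : ℝ)) ^ b < μ := by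
          calc U * (((Γ T : ℝ) - 1) / (T : ℝ)) ^ b
              = U * (((Γ T - 1 : ℤ) : ℝ) / (T : ℝ)) ^ b := by push_cast; ring_nf
            _ ≤ U * ∏ k ∈ Finset.Icc (Γ T - 1 + 1) T, ((k : ℝ) / (b + (k : ℝ))) :=
                mul_le_mul_of_nonneg_left (by exact_mod_cast hlow) hU.le
            _ = A b U (T + 1) (Γ T - 1) := hA.symm
            _ < μ := h2
        have h5 : (((Γ T : ℝ) - 1) / (T : ℝ)) ^ b < μ / U := by
          rw [lt_div_iff₀ hU]; linarith [h4]
        have hΓR1 : (1:ℝ) ≤ (Γ T : ℝ) - 1 := by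
          have : ((1:ℤ):ℝ) ≤ ((Γ T - 1 : ℤ):ℝ) := by exact_mod_cast hj1
          push_cast at this; linarith
        have h6 : ((Γ T : ℝ) - 1) / (T : ℝ) < t := by
          rw [ht, one_div]
          rw [Real.lt_rpow_inv_iff_of_pos (div_nonneg (by linarith) hTR.le) hγ0.le hb]
          exact h5
        have h7 : (Γ T : ℝ) - 1 < t * (T:ℝ) := by
          have := (div_lt_iff₀ hTR).mp h6
          linarith
        linarith
  constructor
  · -- first limit
    have hlow : ∀ᶠ n : ℕ in atTop, t - (1 + b) / (n:ℝ) ≤ (Γ (n:ℤ) : ℝ) / (n:ℝ) := by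
      filter_upwards [eventually_ge_atTop 1] with n hn
      have hnR : (0:ℝ) < (n:ℝ) := by exact_mod_cast hn
      have h := (key (n:ℤ) (by exact_mod_cast hn)).1
      push_cast at h
      have e : t - (1 + b) / (n:ℝ) = (t * (n:ℝ) - (1 + b)) / (n:ℝ) := by field_simp
      rw [e]
      gcongr
    have hup : ∀ᶠ n : ℕ in atTop, (Γ (n:ℤ) : ℝ) / (n:ℝ) ≤ t + 1 / (n:ℝ) := by
      filter_upwards [eventually_ge_atTop 1] with n hn
      have hnR : (0:ℝ) < (n:ℝ) := by exact_mod_cast hn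
      have h := (key (n:ℤ) (by exact_mod_cast hn)).2
      push_cast at h
      have e : t + 1 / (n:ℝ) = (t * (n:ℝ) + 1) / (n:ℝ) := by field_simp
      rw [e]
      gcongr
    have hl : Tendsto (fun n : ℕ => t - (1 + b) / (n:ℝ)) atTop (nhds t) := by
      have : Tendsto (fun n : ℕ => (1 + b) / (n:ℝ)) atTop (nhds 0) := by
        simpa [div_eq_mul_inv] using (tendsto_one_div_atTop_nhds_zero_nat.const_mul (1 + b))
      simpa using (tendsto_const_nhds.sub this)
    have hu : Tendsto (fun n : ℕ => t + 1 / (n:ℝ)) atTop (nhds t) := by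
      simpa using ((tendsto_const_nhds (x := t)).add tendsto_one_div_atTop_nhds_zero_nat)
    exact tendsto_of_tendsto_of_tendsto_of_le_of_le' hl hu hlow hup
  · -- second limit
    have hbig : Tendsto (fun n : ℕ => t * (n:ℝ) - (1 + b)) atTop atTop := by
      apply Filter.tendsto_atTop_add_const_right
      exact (tendsto_natCast_atTop_atTop.const_mul_atTop ht0)
    have hev : ∀ᶠ n : ℕ in atTop, 1 ≤ t * (n:ℝ) - (1 + b) ∧ 1 ≤ n := by
      filter_upwards [hbig.eventually_ge_atTop 1, eventually_ge_atTop 1] with n h1 h2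
      exact ⟨h1, h2⟩
    have hupA : ∀ᶠ n : ℕ in atTop,
        A b U ((n:ℤ) + 1) (Γ (n:ℤ)) ≤ μ + μ * b / (t * (n:ℝ) - (1 + b)) := by
      filter_upwards [hev] with n hn
      obtain ⟨hn1, hn2⟩ := hn
      obtain ⟨h0, h1, h2, h3⟩ := hΓ (n:ℤ) (by exact_mod_cast hn2)
      have hΓlow := (key (n:ℤ) (by exact_mod_cast hn2)).1
      have hΓR : (1:ℝ) ≤ (Γ (n:ℤ) : ℝ) := le_trans hn1 hΓlow
      have hΓpos : (0:ℝ) < (Γ (n:ℤ) : ℝ) := by linarith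
      -- ratio identity
      have hΓ1 : (1:ℤ) ≤ Γ (n:ℤ) := by exact_mod_cast hΓR
      have hident : A b U ((n:ℤ) + 1) (Γ (n:ℤ) - 1)
          = ((Γ (n:ℤ) : ℝ) / (b + (Γ (n:ℤ) : ℝ))) * A b U ((n:ℤ) + 1) (Γ (n:ℤ)) := by
        unfold A
        rw [show (n:ℤ) + 1 - 1 = (n:ℤ) by ring, show Γ (n:ℤ) - 1 + 1 = Γ (n:ℤ) by ring]
        rw [prod_Icc_bot h1]
        ring
      have hfrac : (0:ℝ) < (Γ (n:ℤ) : ℝ) / (b + (Γ (n:ℤ) : ℝ)) :=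
        div_pos hΓpos (by linarith)
      have hAub : A b U ((n:ℤ) + 1) (Γ (n:ℤ)) < μ * ((b + (Γ (n:ℤ) : ℝ)) / (Γ (n:ℤ) : ℝ)) := by
        have h2' := hident ▸ h2
        have : A b U ((n:ℤ) + 1) (Γ (n:ℤ))
            = ((b + (Γ (n:ℤ) : ℝ)) / (Γ (n:ℤ) : ℝ)) * A b U ((n:ℤ) + 1) (Γ (n:ℤ) - 1) := by
          rw [hident]
          field_simp
        rw [this]
        have hpos : (0:ℝ) < (b + (Γ (n:ℤ) : ℝ)) / (Γ (n:ℤ) : ℝ) := div_pos (by linarith) hΓpos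
        calc ((b + (Γ (n:ℤ) : ℝ)) / (Γ (n:ℤ) : ℝ)) * A b U ((n:ℤ) + 1) (Γ (n:ℤ) - 1)
            < ((b + (Γ (n:ℤ) : ℝ)) / (Γ (n:ℤ) : ℝ)) * μ := by
              exact mul_lt_mul_of_pos_left h2 hpos
          _ = μ * ((b + (Γ (n:ℤ) : ℝ)) / (Γ (n:ℤ) : ℝ)) := by ring
      have hbd : μ * ((b + (Γ (n:ℤ) : ℝ)) / (Γ (n:ℤ) : ℝ)) ≤ μ + μ * b / (t * (n:ℝ) - (1 + b)) := by
        have hsplit : (b + (Γ (n:ℤ) : ℝ)) / (Γ (n:ℤ) : ℝ) = 1 + b / (Γ (n:ℤ) : ℝ) := by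
          field_simp
          ring
        rw [hsplit, mul_add, mul_one]
        have : b / (Γ (n:ℤ) : ℝ) ≤ b / (t * (n:ℝ) - (1 + b)) :=
          div_le_div_of_nonneg_left hb.le (by linarith) hΓlow
        have h' : μ * (b / (Γ (n:ℤ) : ℝ)) ≤ μ * (b / (t * (n:ℝ) - (1 + b))) :=
          mul_le_mul_of_nonneg_left this hμ0.le
        have heq : μ * (b / (t * (n:ℝ) - (1 + b))) = μ * b / (t * (n:ℝ) - (1 + b)) := by ring
        linarith [heq ▸ h']
      linarith [hAub.le.trans hbd]
    have hlowA : ∀ᶠ n : ℕ in atTop, μ ≤ A b U ((n:ℤ) + 1) (Γ (n:ℤ)) := by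
      filter_upwards [eventually_ge_atTop 1] with n hn
      exact (hΓ (n:ℤ) (by exact_mod_cast hn)).2.2.2
    have hu : Tendsto (fun n : ℕ => μ + μ * b / (t * (n:ℝ) - (1 + b))) atTop (nhds μ) := by
      have h0 : Tendsto (fun n : ℕ => μ * b / (t * (n:ℝ) - (1 + b))) atTop (nhds 0) := by
        have : Tendsto (fun n : ℕ => (t * (n:ℝ) - (1 + b))⁻¹) atTop (nhds 0) :=
          hbig.inv_tendsto_atTop
        simpa [div_eq_mul_inv] using this.const_mul (μ * b)
      simpa using (tendsto_const_nhds.add h0)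
    exact tendsto_of_tendsto_of_tendsto_of_le_of_le' tendsto_const_nhds hu hlowA hupA
end

section
/- Fix b > 0, U > 0, μ ∈ (0,U), and define Opt_MAR(T) = Γ(T,μ)*A(T+1,Γ(T,μ)) + (T*b - (b+1)*Γ(T,μ))*μ, where Γ(T,μ) is the index with μ ∈ (A(T+1,Γ(T,μ)-1), A(T+1,Γ(T,μ))]. Then lim_{T→∞} Opt_MAR(T)/T = (1 - (μ/U)^{1/b}) * b * μ. -/
open Filter

/-- Optimal value of the `T`-period robust martingale-demand problem (zero initial inventory):
`Opt_MAR(T) = Γ(T) A(T+1,Γ(T)) + (Tb - (b+1)Γ(T)) μ`. -/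
noncomputable def OptMAR (b U μ : ℝ) (Γ : ℤ → ℤ) (T : ℤ) : ℝ :=
  (Γ T : ℝ) * A b U (T + 1) (Γ T) + ((T : ℝ) * b - (b + 1) * (Γ T : ℝ)) * μ

section Aux

lemma exp_le_inv_one_sub {t : ℝ} (ht : t < 1) : Real.exp t ≤ 1 / (1 - t) := by
  have h2 : Real.exp t * (1 - t) ≤ Real.exp t * Real.exp (-t) :=
    mul_le_mul_of_nonneg_left (by linarith [Real.add_one_le_exp (-t)]) (Real.exp_pos t).le
  rw [← Real.exp_add] at h2
  simp only [add_neg_cancel, Real.exp_zero] at h2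
  rw [le_div_iff₀ (by linarith)]
  linarith

lemma factor_upper {b : ℝ} (hb : 0 < b) {x : ℝ} (hx : 1 ≤ x) :
    x / (x + b) ≤ ((x + b) / (x + 1 + b)) ^ b := by
  have hxb : 0 < x + b := by linarith
  have hx1b : 0 < x + 1 + b := by linarith
  have key : ((x + 1 + b) / (x + b)) ^ b ≤ (x + b) / x := by
    have h1 : ((x + 1 + b) / (x + b)) ^ b = Real.exp (Real.log ((x+1+b)/(x+b)) * b) :=
      Real.rpow_def_of_pos (by positivity) b
    have h2 : Real.log ((x+1+b)/(x+b)) ≤ 1 / (x+b) := by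
      have h := Real.log_le_sub_one_of_pos (show (0:ℝ) < (x+1+b)/(x+b) by positivity)
      have he : (x+1+b)/(x+b) - 1 = 1/(x+b) := by field_simp; ring
      linarith
    have h3 : Real.exp (Real.log ((x+1+b)/(x+b)) * b) ≤ Real.exp (b / (x+b)) := by
      rw [Real.exp_le_exp]
      calc Real.log ((x+1+b)/(x+b)) * b ≤ (1/(x+b)) * b :=
            mul_le_mul_of_nonneg_right h2 hb.le
        _ = b / (x+b) := by ring
    have h4 : Real.exp (b / (x+b)) ≤ 1 / (1 - b/(x+b)) := by
      apply exp_le_inv_one_sub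
      rw [div_lt_one hxb]; linarith
    have h5 : 1 / (1 - b/(x+b)) = (x+b)/x := by
      rw [show 1 - b/(x+b) = x/(x+b) by field_simp; ring]
      rw [one_div_div]
    rw [h1]; rw [h5] at h4; linarith
  have hpos : (0:ℝ) < ((x + 1 + b) / (x + b)) ^ b := Real.rpow_pos_of_pos (by positivity) b
  have e1 : ((x+b)/(x+1+b))^b = (((x+1+b)/(x+b))^b)⁻¹ := by
    rw [← Real.inv_rpow (by positivity), inv_div]
  have e2 : x/(x+b) = ((x+b)/x)⁻¹ := by rw [inv_div]
  rw [e1, e2]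
  exact inv_anti₀ hpos key

lemma factor_lower {b : ℝ} (hb : 0 < b) {x : ℝ} (hx : 1 ≤ x) :
    ((x - 1) / x) ^ b ≤ x / (x + b) := by
  have hx0 : 0 < x := by linarith
  rcases eq_or_lt_of_le hx with h1 | h1
  · rw [← h1]; norm_num
    rw [Real.zero_rpow hb.ne']
    exact inv_nonneg.2 (by linarith)
  · have hb1 : 0 < (x-1)/x := div_pos (by linarith) hx0
    have e1 : ((x-1)/x) ^ b = Real.exp (Real.log ((x-1)/x) * b) := Real.rpow_def_of_pos hb1 b
    have h2 : Real.log ((x-1)/x) ≤ -(1/x) := by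
      have h := Real.log_le_sub_one_of_pos hb1
      have he : (x-1)/x - 1 = -(1/x) := by field_simp; ring
      linarith
    have h3 : Real.exp (Real.log ((x-1)/x) * b) ≤ Real.exp (-(b/x)) := by
      rw [Real.exp_le_exp]
      calc Real.log ((x-1)/x) * b ≤ (-(1/x)) * b := mul_le_mul_of_nonneg_right h2 hb.le
        _ = -(b/x) := by ring
    have h4 : Real.exp (-(b/x)) ≤ x/(x+b) := by
      rw [show x/(x+b) = (( x+b)/x)⁻¹ by rw [inv_div], Real.exp_neg]
      apply inv_anti₀ (by positivity)
      have := Real.add_one_le_exp (b/x)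
      have : (x+b)/x = b/x + 1 := by field_simp; ring
      linarith [Real.add_one_le_exp (b/x)]
    rw [e1]; linarith

lemma Icc_prod_top (a n : ℤ) (h : a ≤ n + 1) (f : ℤ → ℝ) :
    ∏ k ∈ Finset.Icc a (n+1), f k = f (n+1) * ∏ k ∈ Finset.Icc a n, f k := by
  rw [← Finset.prod_insert (by simp)]
  congr 1
  ext x
  simp only [Finset.mem_Icc, Finset.mem_insert]
  omega

lemma Icc_prod_bot (a n : ℤ) (h : a ≤ n) (f : ℤ → ℝ) :
    ∏ k ∈ Finset.Icc a n, f k = f a * ∏ k ∈ Finset.Icc (a+1) n, f k := by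
  rw [← Finset.prod_insert (by simp)]
  congr 1
  ext x
  simp only [Finset.mem_Icc, Finset.mem_insert]
  omega

lemma prod_upper {b : ℝ} (hb : 0 < b) (m : ℤ) (hm : 1 ≤ m) :
    ∀ n : ℤ, m - 1 ≤ n →
      ∏ k ∈ Finset.Icc m n, ((k:ℝ)/(b+(k:ℝ))) ≤ (((m:ℝ)+b)/((n:ℝ)+1+b))^b := by
  refine Int.le_induction ?_ ?_
  · rw [Finset.Icc_eq_empty (by omega), Finset.prod_empty]
    have h : ((m:ℝ)+b)/(((m-1:ℤ):ℝ)+1+b) = 1 := by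
      push_cast
      rw [show (m:ℝ) - 1 + 1 + b = (m:ℝ) + b by ring]
      exact div_self (by positivity)
    rw [h, Real.one_rpow]
  · intro n hn ih
    have hmn1 : m ≤ n + 1 := by omega
    rw [Icc_prod_top m n hmn1]
    have hn1 : (1:ℝ) ≤ ((n+1:ℤ):ℝ) := by exact_mod_cast (by omega : (1:ℤ) ≤ n+1)
    have hx : (0:ℝ) < (n:ℝ) + 1 := by
      push_cast at hn1; linarith
    have hfac : ((n+1:ℤ):ℝ)/(b+((n+1:ℤ):ℝ)) ≤ ((((n:ℝ)+1)+b)/(((n:ℝ)+1)+1+b))^b := by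
      have := factor_upper hb hn1
      push_cast at this ⊢
      rw [show b + ((n:ℝ)+1) = ((n:ℝ)+1) + b by ring]
      exact this
    have hb0 : (0:ℝ) ≤ ((n+1:ℤ):ℝ)/(b+((n+1:ℤ):ℝ)) := by
      push_cast
      have : (0:ℝ) < b + ((n:ℝ)+1) := by linarith
      positivity
    have hprod0 : (0:ℝ) ≤ ∏ k ∈ Finset.Icc m n, ((k:ℝ)/(b+(k:ℝ))) := by
      apply Finset.prod_nonneg
      intro k hk
      simp only [Finset.mem_Icc] at hk
      have hk1 : (1:ℝ) ≤ (k:ℝ) := by exact_mod_cast (by omega : (1:ℤ) ≤ k)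
      have : (0:ℝ) < b + (k:ℝ) := by linarith
      positivity
    calc ((n+1:ℤ):ℝ)/(b+((n+1:ℤ):ℝ)) * ∏ k ∈ Finset.Icc m n, ((k:ℝ)/(b+(k:ℝ)))
        ≤ ((((n:ℝ)+1)+b)/(((n:ℝ)+1)+1+b))^b * (((m:ℝ)+b)/((n:ℝ)+1+b))^b := by
          apply mul_le_mul hfac ih hprod0 (by positivity)
      _ = (((m:ℝ)+b)/(((n+1:ℤ):ℝ)+1+b))^b := by
          rw [← Real.mul_rpow (by positivity) (by positivity)]
          congr 1
          push_cast
          have h1 : ((n:ℝ)+1+b) ≠ 0 := by positivity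
          have h2 : ((n:ℝ)+1+1+b) ≠ 0 := by positivity
          field_simp

lemma prod_nonneg_aux {b : ℝ} (hb : 0 < b) (m n : ℤ) (hm : 1 ≤ m) :
    (0:ℝ) ≤ ∏ k ∈ Finset.Icc m n, ((k:ℝ)/(b+(k:ℝ))) := by
  apply Finset.prod_nonneg
  intro k hk
  simp only [Finset.mem_Icc] at hk
  have hk1 : (1:ℝ) ≤ (k:ℝ) := by exact_mod_cast (by omega : (1:ℤ) ≤ k)
  have : (0:ℝ) < b + (k:ℝ) := by linarith
  positivity

lemma prod_lower {b : ℝ} (hb : 0 < b) (m : ℤ) (hm : 1 ≤ m) :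
    ∀ n : ℤ, m - 1 ≤ n →
      (((m:ℝ)-1)/(n:ℝ))^b ≤ ∏ k ∈ Finset.Icc m n, ((k:ℝ)/(b+(k:ℝ))) := by
  refine Int.le_induction ?_ ?_
  · rw [Finset.Icc_eq_empty (by omega), Finset.prod_empty]
    have h0 : (0:ℝ) ≤ ((m:ℝ)-1)/(((m-1:ℤ):ℝ)) := by
      push_cast
      rcases eq_or_lt_of_le ((by exact_mod_cast hm : (1:ℝ) ≤ (m:ℝ))) with h | h
      · rw [← h]; norm_num
      · exact le_of_lt (div_pos (by linarith) (by linarith))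
    have h1 : ((m:ℝ)-1)/(((m-1:ℤ):ℝ)) ≤ 1 := by
      push_cast
      exact div_self_le_one _
    exact Real.rpow_le_one h0 h1 hb.le
  · intro n hn ih
    have hmn1 : m ≤ n + 1 := by omega
    rw [Icc_prod_top m n hmn1]
    rcases eq_or_lt_of_le hm with h2 | h2
    · -- m = 1 : LHS is 0
      have : ((m:ℝ)-1)/((n+1:ℤ):ℝ) = 0 := by
        rw [show (m:ℝ) - 1 = 0 by exact_mod_cast congrArg (fun x:ℤ => (x:ℝ)-1) h2.symm ▸ (by norm_num : ((1:ℤ):ℝ)-1 = 0)]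
        exact zero_div _
      rw [this, Real.zero_rpow hb.ne']
      have := prod_nonneg_aux hb m n hm
      have hk1 : (1:ℝ) ≤ ((n+1:ℤ):ℝ) := by exact_mod_cast (by omega : (1:ℤ) ≤ n+1)
      have hbb : (0:ℝ) < b + ((n+1:ℤ):ℝ) := by linarith
      positivity
    · -- 2 ≤ m, so n ≥ m-1 ≥ 1
      have hn1 : (1:ℝ) ≤ (n:ℝ) := by exact_mod_cast (by omega : (1:ℤ) ≤ n)
      have hx1 : (1:ℝ) ≤ (n:ℝ)+1 := by linarith
      have hm1 : (0:ℝ) ≤ (m:ℝ)-1 := by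
        have : (1:ℝ) ≤ (m:ℝ) := by exact_mod_cast hm
        linarith
      have hfac : ((n:ℝ)/((n:ℝ)+1))^b ≤ ((n+1:ℤ):ℝ)/(b+((n+1:ℤ):ℝ)) := by
        have := factor_lower hb hx1
        push_cast
        rw [show b + ((n:ℝ)+1) = ((n:ℝ)+1) + b by ring]
        rw [show (n:ℝ) = ((n:ℝ)+1)-1 by ring]
        convert this using 3 <;> ring
      calc (((m:ℝ)-1)/((n+1:ℤ):ℝ))^b
          = (((n:ℝ)/((n:ℝ)+1)) * (((m:ℝ)-1)/(n:ℝ)))^b := by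
            congr 1
            push_cast
            field_simp
        _ = ((n:ℝ)/((n:ℝ)+1))^b * (((m:ℝ)-1)/(n:ℝ))^b := by
            apply Real.mul_rpow (by positivity) (by positivity)
        _ ≤ (((n+1:ℤ):ℝ)/(b+((n+1:ℤ):ℝ))) * ∏ k ∈ Finset.Icc m n, ((k:ℝ)/(b+(k:ℝ))) := by
            apply mul_le_mul hfac ih (by positivity) _
            push_cast
            have : (0:ℝ) < b + ((n:ℝ)+1) := by linarith
            positivity

lemma A_eq (b U : ℝ) (T j : ℤ) :
    A b U (T+1) j = U * ∏ k ∈ Finset.Icc (j+1) T, ((k:ℝ)/(b+(k:ℝ))) := by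
  unfold A
  norm_num

lemma rpow_inv_cancel {b X : ℝ} (hb : 0 < b) (hX : 0 ≤ X) : (X ^ b) ^ (1/b) = X := by
  rw [← Real.rpow_mul hX, mul_one_div, div_self hb.ne', Real.rpow_one]

lemma bound_lower {b U μ : ℝ} (hb : 0 < b) (hU : 0 < U) (hμ0 : 0 < μ)
    {T g : ℤ} (hT : 1 ≤ T) (hg0 : 0 ≤ g) (hgT : g ≤ T)
    (hA : μ ≤ A b U (T+1) g) :
    (μ/U) ^ (1/b) * ((T:ℝ)+1+b) ≤ (g:ℝ) + 1 + b := by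
  have hT0 : (0:ℝ) < (T:ℝ) + 1 + b := by
    have : (1:ℝ) ≤ (T:ℝ) := by exact_mod_cast hT
    linarith
  have hP := prod_upper hb (g+1) (by omega) T (by omega)
  rw [A_eq] at hA
  have h1 : μ/U ≤ (((g:ℝ)+1+b)/((T:ℝ)+1+b))^b := by
    rw [div_le_iff₀ hU] at *
    calc μ ≤ U * ∏ k ∈ Finset.Icc (g+1) T, ((k:ℝ)/(b+(k:ℝ))) := hA
      _ ≤ (((g:ℝ)+1+b)/((T:ℝ)+1+b))^b * U := by
        rw [mul_comm]
        apply mul_le_mul_of_nonneg_right _ hU.le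
        calc ∏ k ∈ Finset.Icc (g+1) T, ((k:ℝ)/(b+(k:ℝ)))
            ≤ ((((g+1:ℤ):ℝ)+b)/((T:ℝ)+1+b))^b := hP
          _ = (((g:ℝ)+1+b)/((T:ℝ)+1+b))^b := by push_cast; ring_nf
  have hg1b : (0:ℝ) ≤ ((g:ℝ)+1+b)/((T:ℝ)+1+b) := by
    have : (0:ℝ) ≤ (g:ℝ) := by exact_mod_cast hg0
    positivity
  have h2 : (μ/U)^(1/b) ≤ ((g:ℝ)+1+b)/((T:ℝ)+1+b) := by
    calc (μ/U)^(1/b) ≤ ((((g:ℝ)+1+b)/((T:ℝ)+1+b))^b)^(1/b) :=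
          Real.rpow_le_rpow (by positivity) h1 (by positivity)
      _ = ((g:ℝ)+1+b)/((T:ℝ)+1+b) := rpow_inv_cancel hb hg1b
  calc (μ/U)^(1/b) * ((T:ℝ)+1+b) ≤ (((g:ℝ)+1+b)/((T:ℝ)+1+b)) * ((T:ℝ)+1+b) :=
        mul_le_mul_of_nonneg_right h2 hT0.le
    _ = (g:ℝ)+1+b := by field_simp

lemma bound_upper {b U μ : ℝ} (hb : 0 < b) (hU : 0 < U) (hμ0 : 0 < μ)
    {T g : ℤ} (hT : 1 ≤ T) (hg1 : 1 ≤ g) (hgT : g ≤ T)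
    (hA : A b U (T+1) (g-1) < μ) :
    (g:ℝ) < (μ/U) ^ (1/b) * (T:ℝ) + 1 := by
  have hT0 : (0:ℝ) < (T:ℝ) := by exact_mod_cast hT
  have hQ := prod_lower hb g hg1 T (by omega)
  rw [A_eq] at hA
  rw [show g - 1 + 1 = g by ring] at hA
  have h1 : (((g:ℝ)-1)/(T:ℝ))^b < μ/U := by
    rw [lt_div_iff₀ hU]
    calc (((g:ℝ)-1)/(T:ℝ))^b * U = U * (((g:ℝ)-1)/(T:ℝ))^b := by ring
      _ ≤ U * ∏ k ∈ Finset.Icc g T, ((k:ℝ)/(b+(k:ℝ))) :=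
          mul_le_mul_of_nonneg_left hQ hU.le
      _ < μ := hA
  have hg1R : (0:ℝ) ≤ ((g:ℝ)-1)/(T:ℝ) := by
    have : (1:ℝ) ≤ (g:ℝ) := by exact_mod_cast hg1
    exact div_nonneg (by linarith) hT0.le
  have h2 : ((g:ℝ)-1)/(T:ℝ) < (μ/U)^(1/b) := by
    calc ((g:ℝ)-1)/(T:ℝ) = ((((g:ℝ)-1)/(T:ℝ))^b)^(1/b) := (rpow_inv_cancel hb hg1R).symm
      _ < (μ/U)^(1/b) := Real.rpow_lt_rpow (by positivity) h1 (by positivity)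
  have := (div_lt_iff₀ hT0).1 h2
  linarith

lemma A_ratio {b U : ℝ} (T g : ℤ) (hgT : g ≤ T) :
    A b U (T+1) (g-1) = ((g:ℝ)/(b+(g:ℝ))) * A b U (T+1) g := by
  rw [A_eq, A_eq, show g - 1 + 1 = g by ring, Icc_prod_bot g T hgT]
  ring


end Aux

theorem stmt12 (b U μ : ℝ) (hb : 0 < b) (hU : 0 < U) (hμ : μ ∈ Set.Ioo (0 : ℝ) U)
    (Γ : ℤ → ℤ)
    (hΓ : ∀ T : ℤ, 1 ≤ T → 0 ≤ Γ T ∧ Γ T ≤ T ∧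
      A b U (T + 1) (Γ T - 1) < μ ∧ μ ≤ A b U (T + 1) (Γ T)) :
    Tendsto (fun T : ℕ => OptMAR b U μ Γ (T : ℤ) / (T : ℝ)) atTop
      (nhds ((1 - (μ / U) ^ (1 / b)) * b * μ)) := by
  simp only [OptMAR]
  obtain ⟨hμ0, hμU⟩ := hμ
  set r : ℝ := (μ/U)^(1/b) with hr_def
  have hr : 0 < r := Real.rpow_pos_of_pos (by positivity) _
  -- eventual hypotheses
  have ev1 : ∀ᶠ T : ℕ in atTop, 1 ≤ (T:ℤ) := by
    filter_upwards [eventually_ge_atTop 1] with T hT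
    exact_mod_cast hT
  -- lower bound on Γ
  have hGlow : ∀ᶠ T : ℕ in atTop, r * ((T:ℝ)+1+b) - 1 - b ≤ (Γ (T:ℤ) : ℝ) := by
    filter_upwards [ev1] with T hT
    obtain ⟨hg0, hgT, _, hA⟩ := hΓ (T:ℤ) hT
    have := bound_lower hb hU hμ0 hT hg0 hgT hA
    push_cast at this ⊢
    linarith
  -- Γ ≥ 1 eventually
  have hlow_top : Tendsto (fun T : ℕ => r * ((T:ℝ)+1+b) - 1 - b) atTop atTop := by
    have h1 : Tendsto (fun T : ℕ => (T:ℝ)) atTop atTop := tendsto_natCast_atTop_atTop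
    have h2 : Tendsto (fun T : ℕ => r * (T:ℝ)) atTop atTop := h1.const_mul_atTop hr
    have h3 := tendsto_atTop_add_const_right atTop (r*(1+b) - 1 - b) h2
    apply h3.congr
    intro T; ring
  have evg1 : ∀ᶠ T : ℕ in atTop, 1 ≤ Γ (T:ℤ) := by
    filter_upwards [hGlow, hlow_top.eventually_ge_atTop 1] with T h1 h2
    exact_mod_cast (by linarith : (1:ℝ) ≤ (Γ (T:ℤ) : ℝ))
  -- upper bound on Γ
  have hGup : ∀ᶠ T : ℕ in atTop, (Γ (T:ℤ) : ℝ) < r * (T:ℝ) + 1 := by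
    filter_upwards [ev1, evg1] with T hT hg1
    obtain ⟨_, hgT, hA, _⟩ := hΓ (T:ℤ) hT
    have := bound_upper hb hU hμ0 hT hg1 hgT hA
    push_cast at this ⊢
    linarith
  -- Γ T / T → r
  have hinv : Tendsto (fun T : ℕ => ((T:ℝ))⁻¹) atTop (nhds 0) :=
    tendsto_inv_atTop_nhds_zero_nat
  have hlowlim : Tendsto (fun T : ℕ => (r * ((T:ℝ)+1+b) - 1 - b) / (T:ℝ)) atTop (nhds r) := by
    have : Tendsto (fun T : ℕ => r + (r*(1+b) - 1 - b) * ((T:ℝ))⁻¹) atTop (nhds (r + (r*(1+b)-1-b)*0)) :=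
      tendsto_const_nhds.add (tendsto_const_nhds.mul hinv)
    rw [show r + (r*(1+b)-1-b)*0 = r by ring] at this
    apply this.congr'
    filter_upwards [eventually_gt_atTop 0] with T hT
    have hT0 : (T:ℝ) ≠ 0 := by positivity
    field_simp
    ring
  have huplim : Tendsto (fun T : ℕ => (r * (T:ℝ) + 1) / (T:ℝ)) atTop (nhds r) := by
    have : Tendsto (fun T : ℕ => r + 1 * ((T:ℝ))⁻¹) atTop (nhds (r + 1*0)) :=
      tendsto_const_nhds.add (tendsto_const_nhds.mul hinv)
    rw [show r + 1*0 = r by ring] at this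
    apply this.congr'
    filter_upwards [eventually_gt_atTop 0] with T hT
    have hT0 : (T:ℝ) ≠ 0 := by positivity
    field_simp
  have hratio : Tendsto (fun T : ℕ => (Γ (T:ℤ) : ℝ) / (T:ℝ)) atTop (nhds r) := by
    apply tendsto_of_tendsto_of_tendsto_of_le_of_le' hlowlim huplim
    · filter_upwards [hGlow, eventually_gt_atTop 0] with T h1 hT
      gcongr
    · filter_upwards [hGup, eventually_gt_atTop 0] with T h1 hT
      have hT0 : (0:ℝ) ≤ (T:ℝ) := by positivity
      exact div_le_div_of_nonneg_right h1.le hT0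
  -- Γ → ∞
  have hGtop : Tendsto (fun T : ℕ => (Γ (T:ℤ) : ℝ)) atTop atTop :=
    tendsto_atTop_mono' atTop hGlow hlow_top
  -- A b U (T+1) (Γ T) → μ
  have hAlim : Tendsto (fun T : ℕ => A b U ((T:ℤ)+1) (Γ (T:ℤ))) atTop (nhds μ) := by
    have hup : Tendsto (fun T : ℕ => (1 + b * ((Γ (T:ℤ) : ℝ))⁻¹) * μ) atTop (nhds μ) := by
      have h0 : Tendsto (fun T : ℕ => ((Γ (T:ℤ) : ℝ))⁻¹) atTop (nhds 0) :=
        hGtop.inv_tendsto_atTop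
      have : Tendsto (fun T : ℕ => (1 + b * ((Γ (T:ℤ) : ℝ))⁻¹) * μ) atTop
          (nhds ((1 + b * 0) * μ)) :=
        (tendsto_const_nhds.add (tendsto_const_nhds.mul h0)).mul tendsto_const_nhds
      rw [show (1 + b * 0) * μ = μ by ring] at this
      exact this
    apply tendsto_of_tendsto_of_tendsto_of_le_of_le' tendsto_const_nhds hup
    · filter_upwards [ev1] with T hT
      exact (hΓ (T:ℤ) hT).2.2.2
    · filter_upwards [ev1, evg1] with T hT hg1
      obtain ⟨_, hgT, hA, _⟩ := hΓ (T:ℤ) hT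
      have hg1R : (1:ℝ) ≤ (Γ (T:ℤ) : ℝ) := by exact_mod_cast hg1
      have hgpos : (0:ℝ) < (Γ (T:ℤ) : ℝ) := by linarith
      have hbg : (0:ℝ) < b + (Γ (T:ℤ) : ℝ) := by linarith
      have hrel := A_ratio (b := b) (U := U) (T:ℤ) (Γ (T:ℤ)) hgT
      -- A(T+1, g) = ((b+g)/g) * A(T+1, g-1) < ((b+g)/g) μ
      have key : A b U ((T:ℤ)+1) (Γ (T:ℤ)) = ((b + (Γ (T:ℤ):ℝ)) / (Γ (T:ℤ):ℝ)) * A b U ((T:ℤ)+1) (Γ (T:ℤ) - 1) := by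
        rw [hrel]
        field_simp
      rw [key]
      calc ((b + (Γ (T:ℤ):ℝ)) / (Γ (T:ℤ):ℝ)) * A b U ((T:ℤ)+1) (Γ (T:ℤ) - 1)
          ≤ ((b + (Γ (T:ℤ):ℝ)) / (Γ (T:ℤ):ℝ)) * μ :=
            mul_le_mul_of_nonneg_left hA.le (by positivity)
        _ = (1 + b * ((Γ (T:ℤ) : ℝ))⁻¹) * μ := by
            rw [show (b + (Γ (T:ℤ):ℝ)) / (Γ (T:ℤ):ℝ) = 1 + b * ((Γ (T:ℤ) : ℝ))⁻¹ by
              field_simp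
              ring]
  -- final combination
  have hfinal : Tendsto (fun T : ℕ =>
      ((Γ (T:ℤ) : ℝ) / (T:ℝ)) * A b U ((T:ℤ)+1) (Γ (T:ℤ))
        + (b - (b+1) * ((Γ (T:ℤ) : ℝ) / (T:ℝ))) * μ) atTop
      (nhds (r * μ + (b - (b+1) * r) * μ)) :=
    (hratio.mul hAlim).add (((tendsto_const_nhds.sub (tendsto_const_nhds.mul hratio)).mul tendsto_const_nhds))
  rw [show (1 - r) * b * μ = r * μ + (b - (b+1) * r) * μ by ring]
  apply hfinal.congr'
  filter_upwards [eventually_gt_atTop 0] with T hT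
  have hT0 : (T:ℝ) ≠ 0 := by positivity
  push_cast
  field_simp
end

section
/- (Limiting price of correlations) Fix b > 0, U > 0, μ ∈ (0,U), and set γ = μ/U, Opt_IND(T) = T*min(b*μ, U-μ), and Opt_MAR(T) = Γ(T,μ)*A(T+1,Γ(T,μ)) + (T*b - (b+1)*Γ(T,μ))*μ. Then lim_{T→∞} Opt_MAR(T)/Opt_IND(T) = 1 - γ^{1/b} if μ ≤ U/(b+1), and equals (1 - γ^{1/b})*b*μ/(U-μ) if μ > U/(b+1). In particular, when b = 1 and μ = U/2 the limit equals 1/2. -/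
open Filter Topology

/-- Optimal value of the `T`-period robust independent-demand problem (zero initial inventory). -/
noncomputable def OptIND (b U μ : ℝ) (T : ℤ) : ℝ := (T : ℝ) * min (b * μ) (U - μ)

noncomputable def Pp (b : ℝ) (j T : ℤ) : ℝ := ∏ k ∈ Finset.Icc (j + 1) T, ((k : ℝ) / (b + (k : ℝ)))

variable {b : ℝ}

lemma Pp_pos (hb : 0 < b) {j T : ℤ} (hj : 0 ≤ j) : 0 < Pp b j T := by
  apply Finset.prod_pos
  intro k hk
  simp only [Finset.mem_Icc] at hk
  have hk0 : (0:ℝ) < (k:ℝ) := by exact_mod_cast (by omega : (0:ℤ) < k)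
  exact div_pos hk0 (by linarith)

lemma Pp_le_one (hb : 0 < b) {j T : ℤ} (hj : 0 ≤ j) : Pp b j T ≤ 1 := by
  apply Finset.prod_le_one
  · intro k hk
    simp only [Finset.mem_Icc] at hk
    have hk0 : (0:ℝ) < (k:ℝ) := by exact_mod_cast (by omega : (0:ℤ) < k)
    have : 0 < b + (k:ℝ) := by linarith
    positivity
  · intro k hk
    simp only [Finset.mem_Icc] at hk
    have hk0 : (0:ℝ) < (k:ℝ) := by exact_mod_cast (by omega : (0:ℤ) < k)
    rw [div_le_one (by linarith)]
    linarith

lemma Pp_split {i j T : ℤ} (hij : i ≤ j) (hjT : j ≤ T) :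
    Pp b i T = Pp b i j * Pp b j T := by
  unfold Pp
  have h1 : ∀ a c : ℤ, Finset.Icc (a+1) c = Finset.Ioc a c := by
    intro a c; ext x; simp [Finset.mem_Icc, Finset.mem_Ioc]
  rw [h1, h1, h1, ← Finset.prod_union]
  · rw [Finset.Ioc_union_Ioc_eq_Ioc hij hjT]
  · rw [Finset.disjoint_left]
    intro x hx hx'
    simp only [Finset.mem_Ioc] at hx hx'
    omega

lemma Pp_step {j T : ℤ} (hjT : j ≤ T) :
    Pp b (j-1) T = ((j:ℝ)/(b+j)) * Pp b j T := by
  unfold Pp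
  have h1 : Finset.Icc (j-1+1) T = insert j (Finset.Icc (j+1) T) := by
    ext x; simp [Finset.mem_Icc]; omega
  rw [h1, Finset.prod_insert (by simp)]

lemma prodIcc_cast (g : ℤ → ℝ) (n : ℕ) :
    ∏ k ∈ Finset.Icc (1:ℤ) (n:ℤ), g k = ∏ k ∈ Finset.range n, g (k+1) := by
  induction n with
  | zero => simp
  | succ m ih =>
    have h1 : Finset.Icc (1:ℤ) ((m+1:ℕ):ℤ) = insert ((m:ℤ)+1) (Finset.Icc (1:ℤ) (m:ℤ)) := by
      ext x; simp [Finset.mem_Icc]; omega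
    rw [h1, Finset.prod_insert (by simp), Finset.prod_range_succ, ih]
    push_cast
    ring

lemma F_tendsto (hb : 0 < b) :
    Tendsto (fun n : ℕ => (n:ℝ)^b * Pp b 0 (n:ℤ)) atTop (𝓝 (Real.Gamma (b+1))) := by
  have key : ∀ n : ℕ, (n:ℝ)^b * Pp b 0 (n:ℤ) = b * Real.GammaSeq b n := by
    intro n
    unfold Pp Real.GammaSeq
    rw [zero_add, prodIcc_cast]
    rw [Finset.prod_range_succ' (fun j => b + (j:ℕ)) n]
    push_cast
    rw [Finset.prod_div_distrib]
    have h1 : ∏ k ∈ Finset.range n, ((k:ℝ)+1) = (n.factorial : ℝ) := by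
      rw [← Finset.prod_range_add_one_eq_factorial, Nat.cast_prod]
      push_cast; rfl
    have h2 : (0:ℝ) < ∏ x ∈ Finset.range n, (b + ((x:ℝ) + 1)) := by
      apply Finset.prod_pos
      intro x hx
      have : (0:ℝ) ≤ (x:ℝ) := Nat.cast_nonneg x
      linarith
    rw [h1]
    field_simp
    ring
  have := (Real.GammaSeq_tendsto_Gamma b).const_mul b
  rw [← Real.Gamma_add_one hb.ne'] at this
  exact this.congr (fun n => (key n).symm)

lemma Fz_tendsto (hb : 0 < b) :
    Tendsto (fun m : ℤ => (m:ℝ)^b * Pp b 0 m) atTop (𝓝 (Real.Gamma (b+1))) := by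
  have h1 : Tendsto (fun m : ℤ => m.toNat) atTop atTop :=
    tendsto_atTop_atTop.2 (fun N => ⟨(N:ℤ), fun m hm => by omega⟩)
  apply ((F_tendsto hb).comp h1).congr'
  filter_upwards [eventually_ge_atTop (0:ℤ)] with m hm
  have e1 : ((m.toNat:ℕ):ℤ) = m := Int.toNat_of_nonneg hm
  simp only [Function.comp_apply]
  have e2 : ((m.toNat : ℕ) : ℝ) = (m : ℝ) := by exact_mod_cast e1
  rw [e1, e2]

lemma Pp0_tendsto_zero (hb : 0 < b) : Tendsto (fun m : ℤ => Pp b 0 m) atTop (𝓝 0) := by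
  have hpow : Tendsto (fun m : ℤ => (m:ℝ)^b) atTop atTop :=
    (tendsto_rpow_atTop hb).comp tendsto_intCast_atTop_atTop
  apply ((Fz_tendsto hb).div_atTop hpow).congr'
  filter_upwards [eventually_ge_atTop (1:ℤ)] with m hm
  have hm0 : (0:ℝ) < (m:ℝ) := by exact_mod_cast (by omega : (0:ℤ) < m)
  have hne : ((m:ℝ))^b ≠ 0 := (Real.rpow_pos_of_pos hm0 b).ne'
  rw [mul_comm, mul_div_assoc, div_self hne, mul_one]

lemma main_limit (b U μ : ℝ) (hb : 0 < b) (hU : 0 < U) (hμ : μ ∈ Set.Ioo (0 : ℝ) U)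
    (Γ : ℤ → ℤ)
    (hΓ : ∀ T : ℤ, 1 ≤ T → 0 ≤ Γ T ∧ Γ T ≤ T ∧
      A b U (T + 1) (Γ T - 1) < μ ∧ μ ≤ A b U (T + 1) (Γ T)) :
    Tendsto (fun T : ℕ => OptMAR b U μ Γ (T : ℤ) / OptIND b U μ (T : ℤ)) atTop
      (𝓝 (b * μ * (1 - (μ/U)^(1/b)) / min (b*μ) (U-μ))) := by
  obtain ⟨hμ0, hμU⟩ := hμ
  have hAeq : ∀ T j : ℤ, A b U (T+1) j = U * Pp b j T := by
    intro T j; simp [A, Pp, add_sub_cancel_right]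
  have hcast : Tendsto (fun T : ℕ => (T:ℤ)) atTop atTop := tendsto_natCast_atTop_atTop
  -- Γ T → ∞
  have hGa : Tendsto (fun T : ℕ => Γ (T:ℤ)) atTop atTop := by
    rw [tendsto_atTop]
    intro M
    have hn0 : (0:ℤ) ≤ max M 0 := le_max_right _ _
    set j : ℤ := max M 0 with hj
    have h0 : Tendsto (fun T : ℕ => U * (Pp b 0 (T:ℤ) / Pp b 0 j)) atTop (𝓝 0) := by
      have := (((Pp0_tendsto_zero hb).comp hcast).div_const (Pp b 0 j)).const_mul U
      simpa using this
    filter_upwards [h0.eventually_lt_const hμ0, hcast.eventually_ge_atTop (j+1)] with T hlt hTn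
    have hT1 : (1:ℤ) ≤ (T:ℤ) := by omega
    obtain ⟨hg0, hgT, _, hgA⟩ := hΓ (T:ℤ) hT1
    by_contra hcon
    push_neg at hcon
    have hcon' : Γ (T:ℤ) ≤ j := by omega
    have hjT : j ≤ (T:ℤ) := by omega
    have hsplit1 : Pp b 0 (T:ℤ) = Pp b 0 j * Pp b j (T:ℤ) := Pp_split hn0 hjT
    have hsplit2 : Pp b (Γ (T:ℤ)) (T:ℤ) = Pp b (Γ (T:ℤ)) j * Pp b j (T:ℤ) := Pp_split hcon' hjT
    have hp1 : 0 < Pp b 0 j := Pp_pos hb le_rfl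
    have hp2 : 0 < Pp b j (T:ℤ) := Pp_pos hb hn0
    have hle : Pp b (Γ (T:ℤ)) (T:ℤ) ≤ Pp b j (T:ℤ) := by
      rw [hsplit2]
      nlinarith [Pp_le_one hb (j := Γ (T:ℤ)) (T := j) hg0, Pp_pos hb (j := Γ (T:ℤ)) (T := j) hg0]
    rw [hAeq] at hgA
    rw [hsplit1, mul_div_cancel_left₀ _ hp1.ne'] at hlt
    have := mul_le_mul_of_nonneg_left hle hU.le
    linarith
  have hGaR : Tendsto (fun T : ℕ => ((Γ (T:ℤ)):ℝ)) atTop atTop :=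
    tendsto_intCast_atTop_atTop.comp hGa
  -- A(T+1, Γ T) → μ
  have hA3 : Tendsto (fun T : ℕ => A b U ((T:ℤ)+1) (Γ (T:ℤ))) atTop (𝓝 μ) := by
    have hup : Tendsto (fun T : ℕ => (1 + b/((Γ (T:ℤ)):ℝ)) * μ) atTop (𝓝 μ) := by
      have := ((tendsto_const_nhds (x := b)).div_atTop hGaR).const_add 1
      have := this.mul_const μ
      simpa using this
    refine tendsto_of_tendsto_of_tendsto_of_le_of_le' tendsto_const_nhds hup ?_ ?_
    · filter_upwards [hcast.eventually_ge_atTop 1] with T hT1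
      exact (hΓ (T:ℤ) hT1).2.2.2
    · filter_upwards [hcast.eventually_ge_atTop 1, hGa.eventually_ge_atTop 1] with T hT1 hg1
      obtain ⟨hg0, hgT, hA1, hA2⟩ := hΓ (T:ℤ) hT1
      have hgr : (1:ℝ) ≤ ((Γ (T:ℤ)):ℝ) := by exact_mod_cast hg1
      have hstep := Pp_step (b := b) (j := Γ (T:ℤ)) hgT
      rw [hAeq] at hA1 ⊢
      rw [hstep] at hA1
      have hbg : 0 < b + ((Γ (T:ℤ)):ℝ) := by linarith
      have hgr0 : (0:ℝ) < ((Γ (T:ℤ)):ℝ) := by linarith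
      have e : U * (((Γ (T:ℤ)):ℝ)/(b + ((Γ (T:ℤ)):ℝ)) * Pp b (Γ (T:ℤ)) (T:ℤ))
          = U * ((Γ (T:ℤ)):ℝ) * Pp b (Γ (T:ℤ)) (T:ℤ) / (b + ((Γ (T:ℤ)):ℝ)) := by ring
      rw [e] at hA1
      have h2 := (div_lt_iff₀ hbg).1 hA1
      have h1 : (1 + b/((Γ (T:ℤ)):ℝ)) = (b + ((Γ (T:ℤ)):ℝ))/((Γ (T:ℤ)):ℝ) := by
        field_simp
        ring
      rw [h1, div_mul_eq_mul_div, le_div_iff₀ hgr0]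
      nlinarith
  -- y T := Γ T / T → (μ/U)^(1/b)
  set C := Real.Gamma (b+1) with hCdef
  have hC : 0 < C := Real.Gamma_pos_of_pos (by linarith)
  have hFzT : Tendsto (fun T : ℕ => ((T:ℤ):ℝ)^b * Pp b 0 (T:ℤ)) atTop (𝓝 C) :=
    (Fz_tendsto hb).comp hcast
  have hFzG : Tendsto (fun T : ℕ => ((Γ (T:ℤ)):ℝ)^b * Pp b 0 (Γ (T:ℤ))) atTop (𝓝 C) :=
    (Fz_tendsto hb).comp hGa
  have hyb : Tendsto (fun T : ℕ => (((Γ (T:ℤ)):ℝ)/((T:ℤ):ℝ))^b) atTop (𝓝 (μ/U)) := by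
    have hR : Tendsto (fun T : ℕ =>
        A b U ((T:ℤ)+1) (Γ (T:ℤ)) * (((Γ (T:ℤ)):ℝ)^b * Pp b 0 (Γ (T:ℤ)))
          / (U * (((T:ℤ):ℝ)^b * Pp b 0 (T:ℤ)))) atTop (𝓝 (μ/U)) := by
      have := (hA3.mul hFzG).div ((tendsto_const_nhds (x := U)).mul hFzT)
        (by positivity : U * C ≠ 0)
      convert this using 2
      · rfl
      rw [mul_div_mul_right _ _ hC.ne']
    apply hR.congr'
    filter_upwards [hcast.eventually_ge_atTop 1, hGa.eventually_ge_atTop 1] with T hT1 hg1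
    obtain ⟨hg0, hgT, _, _⟩ := hΓ (T:ℤ) hT1
    have hgr : (0:ℝ) < ((Γ (T:ℤ)):ℝ) := by exact_mod_cast (by omega : (0:ℤ) < Γ (T:ℤ))
    have hTr : (0:ℝ) < ((T:ℤ):ℝ) := by exact_mod_cast (by omega : (0:ℤ) < (T:ℤ))
    have hsplit : Pp b 0 (T:ℤ) = Pp b 0 (Γ (T:ℤ)) * Pp b (Γ (T:ℤ)) (T:ℤ) := Pp_split hg0 hgT
    have hp1 : 0 < Pp b 0 (Γ (T:ℤ)) := Pp_pos hb le_rfl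
    have hp2 : 0 < Pp b (Γ (T:ℤ)) (T:ℤ) := Pp_pos hb hg0
    rw [hAeq, Real.div_rpow hgr.le hTr.le, hsplit]
    have hTb : (0:ℝ) < ((T:ℤ):ℝ)^b := Real.rpow_pos_of_pos hTr b
    have hgb : (0:ℝ) < ((Γ (T:ℤ)):ℝ)^b := Real.rpow_pos_of_pos hgr b
    have hden : (0:ℝ) < U * (((T:ℤ):ℝ)^b * (Pp b 0 (Γ (T:ℤ)) * Pp b (Γ (T:ℤ)) (T:ℤ))) := by
      positivity
    rw [div_eq_div_iff hden.ne' hTb.ne']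
    ring
  have hy : Tendsto (fun T : ℕ => ((Γ (T:ℤ)):ℝ)/((T:ℤ):ℝ)) atTop (𝓝 ((μ/U)^(1/b))) := by
    have := hyb.rpow_const (Or.inr (by positivity : (0:ℝ) ≤ 1/b))
    apply this.congr'
    filter_upwards [hcast.eventually_ge_atTop 1, hGa.eventually_ge_atTop 0] with T hT1 hg0
    have hy0 : (0:ℝ) ≤ ((Γ (T:ℤ)):ℝ)/((T:ℤ):ℝ) := by
      apply div_nonneg
      · exact_mod_cast hg0
      · exact_mod_cast (by omega : (0:ℤ) ≤ (T:ℤ))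
    rw [← Real.rpow_mul hy0, mul_one_div, div_self hb.ne', Real.rpow_one]
  -- conclusion
  set γ' := (μ/U)^(1/b) with hγ'
  set m := min (b*μ) (U-μ) with hm
  have hm0 : 0 < m := lt_min (mul_pos hb hμ0) (by linarith)
  have hX : Tendsto (fun T : ℕ =>
      (((Γ (T:ℤ)):ℝ)/((T:ℤ):ℝ) * A b U ((T:ℤ)+1) (Γ (T:ℤ))
        + (b - (b+1) * (((Γ (T:ℤ)):ℝ)/((T:ℤ):ℝ))) * μ) / m) atTop
      (𝓝 ((γ' * μ + (b - (b+1) * γ') * μ) / m)) :=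
    ((hy.mul hA3).add ((tendsto_const_nhds.sub (hy.const_mul (b+1))).mul_const μ)).div_const m
  have hval : (γ' * μ + (b - (b+1) * γ') * μ) / m = b * μ * (1 - γ') / m := by
    congr 1; ring
  rw [hval] at hX
  apply hX.congr'
  filter_upwards [hcast.eventually_ge_atTop 1] with T hT1
  have hTr : (0:ℝ) < ((T:ℤ):ℝ) := by exact_mod_cast (by omega : (0:ℤ) < (T:ℤ))
  rw [OptMAR, OptIND]
  have e1 : ((T:ℤ):ℝ) ≠ 0 := hTr.ne'
  have key : ((T:ℤ):ℝ) * (((Γ (T:ℤ)):ℝ)/((T:ℤ):ℝ) * A b U ((T:ℤ)+1) (Γ (T:ℤ))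
        + (b - (b+1) * (((Γ (T:ℤ)):ℝ)/((T:ℤ):ℝ))) * μ)
      = ((Γ (T:ℤ)):ℝ) * A b U ((T:ℤ)+1) (Γ (T:ℤ)) + (((T:ℤ):ℝ) * b - (b+1) * ((Γ (T:ℤ)):ℝ)) * μ := by
    have e2 : ((T:ℕ):ℝ) ≠ 0 := by exact_mod_cast e1
    push_cast
    field_simp [e2]
  rw [← key, mul_div_mul_left _ _ e1]

theorem stmt13 (b U μ : ℝ) (hb : 0 < b) (hU : 0 < U) (hμ : μ ∈ Set.Ioo (0 : ℝ) U)
    (Γ : ℤ → ℤ)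
    (hΓ : ∀ T : ℤ, 1 ≤ T → 0 ≤ Γ T ∧ Γ T ≤ T ∧
      A b U (T + 1) (Γ T - 1) < μ ∧ μ ≤ A b U (T + 1) (Γ T)) :
    (μ ≤ U / (b + 1) →
      Tendsto (fun T : ℕ => OptMAR b U μ Γ (T : ℤ) / OptIND b U μ (T : ℤ)) atTop
        (nhds (1 - (μ / U) ^ (1 / b)))) ∧
    (U / (b + 1) < μ →
      Tendsto (fun T : ℕ => OptMAR b U μ Γ (T : ℤ) / OptIND b U μ (T : ℤ)) atTop
        (nhds ((1 - (μ / U) ^ (1 / b)) * b * μ / (U - μ)))) ∧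
    (b = 1 → μ = U / 2 →
      Tendsto (fun T : ℕ => OptMAR b U μ Γ (T : ℤ) / OptIND b U μ (T : ℤ)) atTop
        (nhds (1 / 2))) := by
  have hmain := main_limit b U μ hb hU hμ Γ hΓ
  obtain ⟨hμ0, hμU⟩ := hμ
  have hbμ : 0 < b * μ := mul_pos hb hμ0
  have hb1 : (0:ℝ) < b + 1 := by linarith
  have part1 : μ ≤ U / (b + 1) →
      Tendsto (fun T : ℕ => OptMAR b U μ Γ (T : ℤ) / OptIND b U μ (T : ℤ)) atTop
        (nhds (1 - (μ / U) ^ (1 / b))) := by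
    intro h
    have h' : μ * (b + 1) ≤ U := (le_div_iff₀ hb1).1 h
    have hmin : min (b*μ) (U-μ) = b*μ := min_eq_left (by linarith)
    rw [hmin, mul_div_cancel_left₀ _ hbμ.ne'] at hmain
    exact hmain
  refine ⟨part1, ?_, ?_⟩
  · intro h
    have h' : U < μ * (b + 1) := (div_lt_iff₀ hb1).1 h
    have hmin : min (b*μ) (U-μ) = U - μ := min_eq_right (by linarith)
    rw [hmin] at hmain
    have hval : b * μ * (1 - (μ / U) ^ (1 / b)) / (U - μ)
        = (1 - (μ / U) ^ (1 / b)) * b * μ / (U - μ) := by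
      congr 1
      ring
    rw [hval] at hmain
    exact hmain
  · intro hbe hμe
    have h := part1 (by rw [hμe, hbe]; norm_num)
    have hhalf : μ / U = 1 / 2 := by
      rw [hμe]
      field_simp
    have hv : 1 - (μ / U) ^ (1 / b) = 1 / 2 := by
      rw [hhalf, hbe]
      norm_num
    rw [hv] at h
    exact h
end
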